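/- Let G be a graph with two true twins u, u', let G' = G − u', and define c'(u) = c(u) + c(u') and c'(w) = c(w) for other vertices w. If X' is a hitting set of G' with u ∉ X', then X' is a hitting set of G with c(X') ≤ c'(X'); if u ∈ X', then X' ∪ {u'} is a hitting set of G with c(X' ∪ {u'}) = c'(X'). In both cases OPT(G,c) ≤ OPT(G',c'), and conversely OPT(G',c') ≤ OPT(G,c). -/

import Mathlib

variable {V : Type*}

/-- The triple (u,v,w) induces a path on 3 vertices (u - v - w) in G. -/
def IsInducedP3 (G : SimpleGraph V) (u v w : V) : Prop :=
  u ≠ w ∧ G.Adj u v ∧ G.Adj v w ∧ ¬ G.Adj u w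

/-- A cluster graph: every connected component is a complete graph. -/
def IsClusterGraph (G : SimpleGraph V) : Prop :=
  ∀ u v : V, u ≠ v → G.Reachable u v → G.Adj u v

/-- X is a hitting set of G: deleting X leaves a cluster graph. -/
def IsHittingSet (G : SimpleGraph V) (X : Set V) : Prop :=
  IsClusterGraph (G.induce Xᶜ)

/-- Minimum cost of a hitting set. -/
noncomputable def OPT (G : SimpleGraph V) (c : V → ℕ) : ℕ :=
  sInf {n | ∃ X : Finset V, IsHittingSet G ↑X ∧ ∑ v ∈ X, c v = n}

/-- Maximum weight of a clique. -/
noncomputable def omegaW (G : SimpleGraph V) (c : V → ℕ) : ℕ :=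
  sSup {n | ∃ K : Finset V, G.IsClique (↑K : Set V) ∧ ∑ v ∈ K, c v = n}

/-- u and u' are true twins within the induced subgraph on A. -/
def TrueTwinsIn (G : SimpleGraph V) (A : Set V) (u u' : V) : Prop :=
  u ∈ A ∧ u' ∈ A ∧ G.Adj u u' ∧
    ∀ w ∈ A, w ≠ u → w ≠ u' → (G.Adj u w ↔ G.Adj u' w)

/-!
A graph is a cluster graph exactly when it has no induced `P₃`, so `X` is a hitting set exactly
when it meets every induced `P₃`. Replacing a vertex of an induced `P₃` by a true twin of it
yields again an induced `P₃`. Hence every induced `P₃` through `u'` is mapped, by `u' ↦ u`, to one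
of `G - u'`, and a hitting set of `G - u'` avoiding `u` already meets the original one; if it
contains `u` we add `u'`. Conversely a hitting set of `G` may be assumed to contain both twins or
neither, and then it restricts to a hitting set of `G - u'` of the same cost under `c'`.
-/

open Function Finset

section InducedP3

variable {W : Type*} {G : SimpleGraph V} {x y z : V}

lemma IsInducedP3.symm (h : IsInducedP3 G x y z) : IsInducedP3 G z y x :=
  ⟨h.1.symm, h.2.2.1.symm, h.2.1.symm, fun h' => h.2.2.2 h'.symm⟩

lemma isInducedP3_comap {f : W → V} (hf : Injective f) {x y z : W} :
    IsInducedP3 (G.comap f) x y z ↔ IsInducedP3 G (f x) (f y) (f z) := by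
  simp [IsInducedP3, hf.ne_iff]

lemma isClusterGraph_iff_forall_not_isInducedP3 :
    IsClusterGraph G ↔ ∀ x y z, ¬ IsInducedP3 G x y z := by
  constructor
  · rintro hG x y z ⟨hxz, hxy, hyz, hnxz⟩
    exact hnxz (hG x z hxz (hxy.reachable.trans hyz.reachable))
  · intro hG x y hxy ⟨p⟩
    suffices ∀ {a b : V} (p : G.Walk a b), a = b ∨ G.Adj a b from (this p).resolve_left hxy
    intro a b p
    induction p with
    | nil => exact Or.inl rfl
    | @cons a m b ham _ ih =>
      rcases ih with rfl | hmb
      · exact Or.inr ham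
      · by_contra! h
        exact hG a m b ⟨h.1, ham, hmb, h.2⟩

lemma isHittingSet_iff {X : Set V} :
    IsHittingSet G X ↔ ∀ x y z, IsInducedP3 G x y z → x ∈ X ∨ y ∈ X ∨ z ∈ X := by
  rw [IsHittingSet, isClusterGraph_iff_forall_not_isInducedP3, SimpleGraph.induce]
  simp only [isInducedP3_comap (Embedding.subtype _).injective, Embedding.subtype_apply]
  constructor
  · intro h x y z hP
    by_contra! hn
    exact h ⟨x, hn.1⟩ ⟨y, hn.2.1⟩ ⟨z, hn.2.2⟩ hP
  · rintro h ⟨x, hx⟩ ⟨y, hy⟩ ⟨z, hz⟩ hP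
    rcases h x y z hP with h | h | h <;> contradiction

lemma IsHittingSet.subtype {p : V → Prop} [DecidablePred p] {X : Finset V}
    (hX : IsHittingSet G ↑X) :
    IsHittingSet (G.comap (Subtype.val : Subtype p → V)) ↑(X.subtype p) := by
  rw [isHittingSet_iff] at hX ⊢
  intro x y z hP
  simpa using hX _ _ _ ((isInducedP3_comap Subtype.val_injective).1 hP)

lemma IsHittingSet.mem_image_val_of_isInducedP3 {p : V → Prop} {X' : Set (Subtype p)}
    (hX' : IsHittingSet (G.comap (Subtype.val : Subtype p → V)) X')
    (hP : IsInducedP3 G x y z) (hx : p x) (hy : p y) (hz : p z) :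
    x ∈ Subtype.val '' X' ∨ y ∈ Subtype.val '' X' ∨ z ∈ Subtype.val '' X' :=
  (isHittingSet_iff.1 hX' ⟨x, hx⟩ ⟨y, hy⟩ ⟨z, hz⟩
    ((isInducedP3_comap Subtype.val_injective).2 hP)).imp (Set.mem_image_of_mem _)
      (Or.imp (Set.mem_image_of_mem _) (Set.mem_image_of_mem _))

lemma isHittingSet_insert_image_val [DecidableEq V] {a : V} {X' : Finset {w : V // w ≠ a}}
    (hX' : IsHittingSet (G.comap (Subtype.val : {w : V // w ≠ a} → V)) ↑X') :
    IsHittingSet G ↑(insert a (X'.image Subtype.val)) := by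
  rw [isHittingSet_iff]
  intro x y z hP
  simp only [coe_insert, coe_image, Set.mem_insert_iff]
  by_cases hx : x = a
  · exact Or.inl (Or.inl hx)
  by_cases hy : y = a
  · exact Or.inr (Or.inl (Or.inl hy))
  by_cases hz : z = a
  · exact Or.inr (Or.inr (Or.inl hz))
  exact (hX'.mem_image_val_of_isInducedP3 hP hx hy hz).imp Or.inr (Or.imp Or.inr Or.inr)

end InducedP3

section TrueTwins

variable {G : SimpleGraph V} {u u' x y z : V}

lemma TrueTwinsIn.symm {A : Set V} (h : TrueTwinsIn G A u u') : TrueTwinsIn G A u' u :=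
  ⟨h.2.1, h.1, h.2.2.1.symm, fun w hw hwu' hwu => (h.2.2.2 w hw hwu hwu').symm⟩

lemma IsInducedP3.of_trueTwinsIn_left {x' : V} (htw : TrueTwinsIn G Set.univ x x')
    (h : IsInducedP3 G x y z) : IsInducedP3 G x' y z := by
  obtain ⟨hxz, hxy, hyz, hnxz⟩ := h
  obtain ⟨-, -, hxx', htw⟩ := htw
  have hy : y ≠ x' := by
    rintro rfl
    exact hnxz ((htw z trivial hxz.symm hyz.ne.symm).2 hyz)
  have hz : z ≠ x' := by
    rintro rfl
    exact hnxz hxx'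
  exact ⟨hz.symm, (htw y trivial hxy.ne.symm hy).1 hxy, hyz,
    fun h => hnxz ((htw z trivial hxz.symm hz).2 h)⟩

lemma IsInducedP3.of_trueTwinsIn_middle {y' : V} (htw : TrueTwinsIn G Set.univ y y')
    (h : IsInducedP3 G x y z) : IsInducedP3 G x y' z := by
  obtain ⟨hxz, hxy, hyz, hnxz⟩ := h
  obtain ⟨-, -, -, htw⟩ := htw
  have hx : x ≠ y' := by
    rintro rfl
    exact hnxz ((htw z trivial hyz.ne.symm hxz.symm).1 hyz)
  have hz : z ≠ y' := by
    rintro rfl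
    exact hnxz ((htw x trivial hxy.ne hxz).1 hxy.symm).symm
  exact ⟨hxz, ((htw x trivial hxy.ne hx).1 hxy.symm).symm,
    (htw z trivial hyz.ne.symm hz).1 hyz, hnxz⟩

lemma IsInducedP3.of_trueTwinsIn_right {z' : V} (htw : TrueTwinsIn G Set.univ z z')
    (h : IsInducedP3 G x y z) : IsInducedP3 G x y z' :=
  (h.symm.of_trueTwinsIn_left htw).symm

lemma IsInducedP3.map_of_trueTwinsIn {r : V → V}
    (hr : ∀ w, r w = w ∨ TrueTwinsIn G Set.univ w (r w)) (h : IsInducedP3 G x y z) :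
    IsInducedP3 G (r x) (r y) (r z) := by
  have hx : IsInducedP3 G (r x) y z :=
    (hr x).elim (fun e => by rw [e]; exact h) h.of_trueTwinsIn_left
  have hy : IsInducedP3 G (r x) (r y) z :=
    (hr y).elim (fun e => by rw [e]; exact hx) hx.of_trueTwinsIn_middle
  exact (hr z).elim (fun e => by rw [e]; exact hy) hy.of_trueTwinsIn_right

lemma TrueTwinsIn.isHittingSet_image_val [DecidableEq V] (htw : TrueTwinsIn G Set.univ u u')
    {X' : Finset {w : V // w ≠ u'}}
    (hX' : IsHittingSet (G.comap (Subtype.val : {w : V // w ≠ u'} → V)) ↑X')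
    (hu : (⟨u, htw.2.2.1.ne⟩ : {w : V // w ≠ u'}) ∉ X') :
    IsHittingSet G ↑(X'.image Subtype.val) := by
  let r : V → V := fun w => if w = u' then u else w
  have hr_twin : ∀ w, r w = w ∨ TrueTwinsIn G Set.univ w (r w) := by
    intro w
    by_cases hw : w = u'
    · subst hw
      exact Or.inr (by simpa [r] using htw.symm)
    · simp [r, hw]
  have hr_ne : ∀ w, r w ≠ u' := by
    intro w
    by_cases hw : w = u' <;> simp [r, hw, htw.2.2.1.ne]
  have hr_mem : ∀ w, r w ∈ Subtype.val '' (X' : Set {w : V // w ≠ u'}) →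
      w ∈ (X'.image Subtype.val : Set V) := by
    rintro w ⟨a, ha, haw⟩
    by_cases hw : w = u'
    · simp only [hw, r, if_true] at haw
      exact absurd ((Subtype.ext haw : a = ⟨u, htw.2.2.1.ne⟩) ▸ ha) hu
    · simp only [hw, r, if_false] at haw
      exact mem_coe.2 (mem_image.2 ⟨a, ha, haw⟩)
  rw [isHittingSet_iff]
  intro x y z hP
  exact (hX'.mem_image_val_of_isInducedP3 (hP.map_of_trueTwinsIn hr_twin) (hr_ne x) (hr_ne y)
    (hr_ne z)).imp (hr_mem x) (Or.imp (hr_mem y) (hr_mem z))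

lemma image_val_subtype_ne [DecidableEq V] (X : Finset V) (a : V) :
    (X.subtype (· ≠ a)).image Subtype.val = X.erase a := by
  ext v
  simp [and_comm]

lemma TrueTwinsIn.isHittingSet_erase [DecidableEq V] (htw : TrueTwinsIn G Set.univ u u')
    {X : Finset V} (hX : IsHittingSet G ↑X) (hu : u ∉ X) : IsHittingSet G ↑(X.erase u') := by
  rw [← image_val_subtype_ne]
  exact htw.isHittingSet_image_val hX.subtype (by simpa using hu)

lemma TrueTwinsIn.exists_subset_isHittingSet_mem_iff_mem [DecidableEq V]
    (htw : TrueTwinsIn G Set.univ u u') {X : Finset V} (hX : IsHittingSet G ↑X) :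
    ∃ Y ⊆ X, IsHittingSet G ↑Y ∧ (u ∈ Y ↔ u' ∈ Y) := by
  by_cases hu : u ∈ X <;> by_cases hu' : u' ∈ X
  · exact ⟨X, subset_rfl, hX, iff_of_true hu hu'⟩
  · exact ⟨X.erase u, erase_subset _ _, htw.symm.isHittingSet_erase hX hu',
      iff_of_false (notMem_erase _ _) (fun h => hu' (mem_of_mem_erase h))⟩
  · exact ⟨X.erase u', erase_subset _ _, htw.isHittingSet_erase hX hu,
      iff_of_false (fun h => hu (mem_of_mem_erase h)) (notMem_erase _ _)⟩
  · exact ⟨X, subset_rfl, hX, iff_of_false hu hu'⟩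

end TrueTwins

section MergedCost

variable [DecidableEq V]

/-- The cost `c'` of the reduced instance `G - u'`. -/
def mergedCost (c : V → ℕ) (u u' : V) (w : {w : V // w ≠ u'}) : ℕ :=
  if w.1 = u then c u + c u' else c w.1

variable (c : V → ℕ) {u u' : V}

lemma sum_mergedCost (hne : u ≠ u') (X' : Finset {w : V // w ≠ u'}) :
    ∑ w ∈ X', mergedCost c u u' w =
      ∑ w ∈ X'.image Subtype.val, c w +
        if (⟨u, hne⟩ : {w : V // w ≠ u'}) ∈ X' then c u' else 0 := by
  have hsplit : ∀ w : {w : V // w ≠ u'},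
      mergedCost c u u' w = c w.1 + if w = ⟨u, hne⟩ then c u' else 0 := by
    intro w
    by_cases hw : w.1 = u <;> simp [mergedCost, hw, Subtype.ext_iff]
  rw [sum_congr rfl fun w _ => hsplit w, sum_add_distrib, sum_ite_eq',
    sum_image fun _ _ _ _ => Subtype.ext]

lemma sum_mergedCost_of_notMem (hne : u ≠ u') {X' : Finset {w : V // w ≠ u'}}
    (hu : ⟨u, hne⟩ ∉ X') :
    ∑ w ∈ X', mergedCost c u u' w = ∑ w ∈ X'.image Subtype.val, c w := by
  rw [sum_mergedCost c hne, if_neg hu, add_zero]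

lemma sum_mergedCost_of_mem (hne : u ≠ u') {X' : Finset {w : V // w ≠ u'}}
    (hu : ⟨u, hne⟩ ∈ X') :
    ∑ w ∈ X', mergedCost c u u' w = ∑ w ∈ insert u' (X'.image Subtype.val), c w := by
  have hu' : u' ∉ X'.image Subtype.val := by simp
  rw [sum_mergedCost c hne, if_pos hu, sum_insert hu', add_comm]

lemma sum_mergedCost_subtype (hne : u ≠ u') {Y : Finset V} (hY : u ∈ Y ↔ u' ∈ Y) :
    ∑ w ∈ Y.subtype (· ≠ u'), mergedCost c u u' w = ∑ v ∈ Y, c v := by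
  by_cases hu : u ∈ Y
  · rw [sum_mergedCost_of_mem c hne (by simpa using hu), image_val_subtype_ne,
      insert_erase (hY.1 hu)]
  · rw [sum_mergedCost_of_notMem c hne (by simpa using hu), image_val_subtype_ne,
      erase_eq_of_notMem (hY.not.1 hu)]

end MergedCost

section OPT

variable {W : Type*} {G : SimpleGraph V} {c : V → ℕ}

lemma OPT_le {X : Finset V} (hX : IsHittingSet G ↑X) : OPT G c ≤ ∑ v ∈ X, c v :=
  Nat.sInf_le ⟨X, hX, rfl⟩

variable (G c) in
lemma exists_isHittingSet_sum_eq_OPT [Fintype V] :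
    ∃ X : Finset V, IsHittingSet G ↑X ∧ ∑ v ∈ X, c v = OPT G c :=
  Nat.sInf_mem (s := {n | ∃ X : Finset V, IsHittingSet G ↑X ∧ ∑ v ∈ X, c v = n})
    ⟨_, univ, isHittingSet_iff.2 fun x _ _ _ => Or.inl (by simp), rfl⟩

lemma OPT_le_OPT_of_forall_exists [Fintype V] {H : SimpleGraph W} {d : W → ℕ}
    (h : ∀ X : Finset V, IsHittingSet G ↑X →
      ∃ Y : Finset W, IsHittingSet H ↑Y ∧ ∑ w ∈ Y, d w ≤ ∑ v ∈ X, c v) :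
    OPT H d ≤ OPT G c := by
  obtain ⟨X, hX, hXc⟩ := exists_isHittingSet_sum_eq_OPT G c
  obtain ⟨Y, hY, hYd⟩ := h X hX
  exact (OPT_le hY).trans (hXc ▸ hYd)

end OPT

/-- True-twin reduction: with G' = G − u' and c'(u) = c(u) + c(u'), c' = c elsewhere,
any hitting set X' of G' yields a hitting set of G (X' itself if u ∉ X', X' ∪ {u'}
otherwise) of cost at most (resp. equal to) c'(X'); moreover OPT(G,c) = OPT(G',c'). -/
theorem stmt_19 [Fintype V] [DecidableEq V] (G : SimpleGraph V) (u u' : V)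
    (htw : TrueTwinsIn G Set.univ u u') (c : V → ℕ) :
    (∀ X' : Finset {w : V // w ≠ u'},
      IsHittingSet (G.comap (Subtype.val : {w : V // w ≠ u'} → V)) ↑X' →
      ((⟨u, htw.2.2.1.ne⟩ : {w : V // w ≠ u'}) ∉ X' →
        IsHittingSet G ↑(X'.image Subtype.val) ∧
        ∑ w ∈ X'.image Subtype.val, c w ≤
          ∑ w ∈ X', (if w.1 = u then c u + c u' else c w.1)) ∧
      ((⟨u, htw.2.2.1.ne⟩ : {w : V // w ≠ u'}) ∈ X' →
        IsHittingSet G ↑(insert u' (X'.image Subtype.val)) ∧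
        ∑ w ∈ insert u' (X'.image Subtype.val), c w =
          ∑ w ∈ X', (if w.1 = u then c u + c u' else c w.1))) ∧
    OPT G c = OPT (G.comap (Subtype.val : {w : V // w ≠ u'} → V))
      (fun w => if w.1 = u then c u + c u' else c w.1) := by
  have hne : u ≠ u' := htw.2.2.1.ne
  refine ⟨fun X' hX' => ⟨fun hu => ⟨htw.isHittingSet_image_val hX' hu,
      (sum_mergedCost_of_notMem c hne hu).ge⟩,
    fun hu => ⟨isHittingSet_insert_image_val hX', (sum_mergedCost_of_mem c hne hu).symm⟩⟩,
    le_antisymm ?_ ?_⟩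
  · refine OPT_le_OPT_of_forall_exists fun X' hX' => ?_
    by_cases hu : (⟨u, hne⟩ : {w : V // w ≠ u'}) ∈ X'
    · exact ⟨_, isHittingSet_insert_image_val hX', (sum_mergedCost_of_mem c hne hu).ge⟩
    · exact ⟨_, htw.isHittingSet_image_val hX' hu, (sum_mergedCost_of_notMem c hne hu).ge⟩
  · refine OPT_le_OPT_of_forall_exists fun X hX => ?_
    obtain ⟨Y, hYX, hY, hYu⟩ := htw.exists_subset_isHittingSet_mem_iff_mem hX
    exact ⟨Y.subtype (· ≠ u'), hY.subtype,
      (sum_mergedCost_subtype c hne hYu).le.trans (sum_le_sum_of_subset hYX)⟩
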